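/- arXiv:1707.09108 — 4 statements merged into one kernel-verified Lean document; each statement's English description precedes it below -/
import Mathlib

section
/- Let 𝒳 be a finite nonempty set, let P be a pmf on 𝒳 with P(x) > 0 for all x, and let 0 ≤ c < 1. Then min over pmfs Q on 𝒳 of { D(Q‖P) + c·H(Q) } = −(1−c)·ln( ∑_{x∈𝒳} P(x)^{1/(1−c)} ), and the minimum is attained by Q(x) = P(x)^{1/(1−c)} / ∑_{x'} P(x')^{1/(1−c)}. -/
/-- A probability mass function on a finite set. -/
def IsPMF {α : Type*} [Fintype α] (Q : α → ℝ) : Prop :=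
  (∀ a, 0 ≤ Q a) ∧ ∑ a, Q a = 1

/-- Shannon entropy `H(Q) = −∑ Q a ln Q a` (with `0 ln 0 = 0`, automatic since `ln 0 = 0`). -/
noncomputable def shannonEnt {α : Type*} [Fintype α] (Q : α → ℝ) : ℝ :=
  -∑ a, Q a * Real.log (Q a)

/-- Relative entropy `D(Q‖P) = ∑ Q a ln(Q a / P a)` (finite here since `P` is positive). -/
noncomputable def relEnt {α : Type*} [Fintype α] (Q P : α → ℝ) : ℝ :=
  ∑ a, Q a * Real.log (Q a / P a)

private lemma gibbs_nonneg {α : Type*} [Fintype α] (Q R : α → ℝ)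
    (hQ : IsPMF Q) (hR : IsPMF R) (hRpos : ∀ a, 0 < R a) :
    0 ≤ ∑ a, Q a * Real.log (Q a / R a) := by
  have key : ∀ a, Q a - R a ≤ Q a * Real.log (Q a / R a) := by
    intro a
    rcases eq_or_lt_of_le (hQ.1 a) with h | h
    · simp [← h]
      exact (hRpos a).le
    · have hdiv : 0 < R a / Q a := div_pos (hRpos a) h
      have hlog := Real.log_le_sub_one_of_pos hdiv
      have h2 : Q a * Real.log (R a / Q a) ≤ Q a * (R a / Q a - 1) :=
        mul_le_mul_of_nonneg_left hlog h.le
      rw [Real.log_div (hRpos a).ne' h.ne'] at h2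
      rw [Real.log_div h.ne' (hRpos a).ne']
      have h3 : Q a * (R a / Q a - 1) = R a - Q a := by field_simp
      nlinarith [h2, h3]
  calc (0 : ℝ) = ∑ a, (Q a - R a) := by
        rw [Finset.sum_sub_distrib, hQ.2, hR.2]; ring
    _ ≤ _ := Finset.sum_le_sum fun a _ => key a

/-- Gibbs variational identity: for a strictly positive pmf `P` and `0 ≤ c < 1`,
`min_Q { D(Q‖P) + c·H(Q) } = −(1−c)·ln(∑ₓ P x^{1/(1−c)})`, the minimum being attained
at `Q x = P x^{1/(1−c)} / ∑_{x'} P x'^{1/(1−c)}`. -/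
theorem gibbs_variational_identity {α : Type*} [Fintype α] [Nonempty α]
    (P : α → ℝ) (hP : IsPMF P) (hpos : ∀ x, 0 < P x)
    (c : ℝ) (hc0 : 0 ≤ c) (hc1 : c < 1) :
    IsLeast {v : ℝ | ∃ Q : α → ℝ, IsPMF Q ∧ v = relEnt Q P + c * shannonEnt Q}
        (-(1 - c) * Real.log (∑ x, P x ^ (1 / (1 - c)))) ∧
      (IsPMF (fun x : α => P x ^ (1 / (1 - c)) / ∑ x', P x' ^ (1 / (1 - c))) ∧
        relEnt (fun x : α => P x ^ (1 / (1 - c)) / ∑ x', P x' ^ (1 / (1 - c))) P +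
            c * shannonEnt (fun x : α => P x ^ (1 / (1 - c)) / ∑ x', P x' ^ (1 / (1 - c)))
          = -(1 - c) * Real.log (∑ x, P x ^ (1 / (1 - c)))) := by
  have h1c : (0:ℝ) < 1 - c := by linarith
  set b : ℝ := 1 / (1 - c) with hbdef
  have hbc : (1 - c) * b = 1 := by rw [hbdef, mul_one_div, div_self h1c.ne']
  set Z : ℝ := ∑ x, P x ^ b with hZdef
  have hZpos : 0 < Z := Finset.sum_pos (fun x _ => Real.rpow_pos_of_pos (hpos x) b)
    Finset.univ_nonempty
  set Qs : α → ℝ := fun x => P x ^ b / Z with hQsdef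
  have hQspos : ∀ x, 0 < Qs x := fun x => div_pos (Real.rpow_pos_of_pos (hpos x) b) hZpos
  have hQsPMF : IsPMF Qs := by
    refine ⟨fun a => (hQspos a).le, ?_⟩
    show (∑ a, P a ^ b / Z) = 1
    rw [← Finset.sum_div]
    exact div_self hZpos.ne'
  -- key decomposition of the objective
  have decomp : ∀ Q : α → ℝ, IsPMF Q →
      relEnt Q P + c * shannonEnt Q =
        (1 - c) * (∑ a, Q a * Real.log (Q a / Qs a)) - (1 - c) * Real.log Z := by
    intro Q hQ
    have hterm : ∀ a, Q a * Real.log (Q a / P a) - c * (Q a * Real.log (Q a)) =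
        (1 - c) * (Q a * Real.log (Q a / Qs a)) - (1 - c) * Real.log Z * Q a := by
      intro a
      rcases eq_or_lt_of_le (hQ.1 a) with h | h
      · simp [← h]
      · have hlogQs : Real.log (Qs a) = b * Real.log (P a) - Real.log Z := by
          simp only [hQsdef]
          rw [Real.log_div (Real.rpow_pos_of_pos (hpos a) b).ne' hZpos.ne',
            Real.log_rpow (hpos a)]
        rw [Real.log_div h.ne' (hpos a).ne', Real.log_div h.ne' (hQspos a).ne', hlogQs]
        linear_combination (Q a * Real.log (P a)) * hbc
    calc relEnt Q P + c * shannonEnt Q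
        = ∑ a, (Q a * Real.log (Q a / P a) - c * (Q a * Real.log (Q a))) := by
          rw [relEnt, shannonEnt, Finset.sum_sub_distrib, ← Finset.mul_sum]; ring
      _ = ∑ a, ((1 - c) * (Q a * Real.log (Q a / Qs a)) - (1 - c) * Real.log Z * Q a) :=
          Finset.sum_congr rfl fun a _ => hterm a
      _ = (1 - c) * (∑ a, Q a * Real.log (Q a / Qs a)) - (1 - c) * Real.log Z := by
          rw [Finset.sum_sub_distrib, ← Finset.mul_sum, ← Finset.mul_sum, hQ.2, mul_one]
  have hval : relEnt Qs P + c * shannonEnt Qs = -(1 - c) * Real.log Z := by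
    rw [decomp Qs hQsPMF]
    have : ∀ a, Qs a * Real.log (Qs a / Qs a) = 0 := by
      intro a
      rw [div_self (hQspos a).ne', Real.log_one, mul_zero]
    rw [Finset.sum_congr rfl fun a _ => this a, Finset.sum_const_zero]
    ring
  refine ⟨⟨⟨Qs, hQsPMF, hval.symm⟩, ?_⟩, hQsPMF, hval⟩
  rintro v ⟨Q, hQ, rfl⟩
  rw [decomp Q hQ]
  have hnn := gibbs_nonneg Q Qs hQ hQsPMF hQspos
  nlinarith
end

section
/- Let 𝒳 be a finite nonempty set, let P be a pmf on 𝒳 with P(x) > 0 for all x, and let R_s ≥ 0, R_w ≥ 0. Then min over pmfs Q on 𝒳 of [ D(Q‖P) + min{ R_s, [H(Q) − R_w]₊ } ] = min_{0≤s≤1} max_{s≤ρ≤1} { −ρ·ln( ∑_{x∈𝒳} P(x)^{1/ρ} ) + s·R_s − (1−ρ)·R_w }. -/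
open Real Set Finset

set_option linter.unusedSectionVars false

section Aux
variable {α : Type*} [Fintype α] [Nonempty α]

/-- Gibbs: termwise bound. -/
lemma gibbs_term {q r : ℝ} (hq : 0 ≤ q) (hr : 0 < r) :
    q - r ≤ q * Real.log (q / r) := by
  rcases eq_or_lt_of_le hq with h | h
  · simp [← h]; positivity
  · have h1 : Real.log (r / q) ≤ r / q - 1 := Real.log_le_sub_one_of_pos (by positivity)
    have h2 : Real.log (q / r) = - Real.log (r / q) := by
      rw [← Real.log_inv]; congr 1; field_simp
    have h3 : q * (r / q) = r := by field_simp
    nlinarith [mul_le_mul_of_nonneg_left h1 hq]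

lemma gibbs_sum {Q R : α → ℝ} (hQ : IsPMF Q) (hR : ∀ x, 0 < R x) (hRs : ∑ x, R x ≤ 1) :
    0 ≤ ∑ x, Q x * Real.log (Q x / R x) := by
  have : ∑ x, (Q x - R x) ≤ ∑ x, Q x * Real.log (Q x / R x) :=
    Finset.sum_le_sum fun x _ => gibbs_term (hQ.1 x) (hR x)
  have h2 : ∑ x, (Q x - R x) = 1 - ∑ x, R x := by
    rw [Finset.sum_sub_distrib, hQ.2]
  linarith

lemma relEnt_nonneg {Q P : α → ℝ} (hQ : IsPMF Q) (hP : IsPMF P) (hpos : ∀ x, 0 < P x) :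
    0 ≤ relEnt Q P := gibbs_sum hQ hpos hP.2.le

lemma shannonEnt_le_log_card {Q : α → ℝ} (hQ : IsPMF Q) :
    shannonEnt Q ≤ Real.log (Fintype.card α) := by
  have hc : (0:ℝ) < Fintype.card α := by
    exact_mod_cast Fintype.card_pos
  have h0 := gibbs_sum (R := fun _ => (Fintype.card α : ℝ)⁻¹) hQ
    (fun _ => by positivity) (by rw [Finset.sum_const, Finset.card_univ, nsmul_eq_mul, mul_inv_cancel₀ hc.ne'])
  have he : ∀ x, Q x * Real.log (Q x / (Fintype.card α : ℝ)⁻¹)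
      = Q x * Real.log (Q x) + Q x * Real.log (Fintype.card α) := by
    intro x
    rcases eq_or_lt_of_le (hQ.1 x) with h | h
    · simp [← h]
    · rw [div_inv_eq_mul, Real.log_mul (ne_of_gt h) hc.ne']; ring
  rw [Finset.sum_congr rfl (fun x _ => he x), Finset.sum_add_distrib,
    ← Finset.sum_mul, hQ.2] at h0
  unfold shannonEnt
  linarith

noncomputable def tiltZ (P : α → ℝ) (ρ : ℝ) : ℝ := ∑ x, P x ^ (1/ρ)

noncomputable def tiltQ (P : α → ℝ) (ρ : ℝ) : α → ℝ := fun x => P x ^ (1/ρ) / tiltZ P ρ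

variable {P : α → ℝ}

lemma tiltZ_pos (hpos : ∀ x, 0 < P x) (ρ : ℝ) : 0 < tiltZ P ρ :=
  Finset.sum_pos (fun x _ => Real.rpow_pos_of_pos (hpos x) _) Finset.univ_nonempty

lemma tiltQ_pos (hpos : ∀ x, 0 < P x) (ρ : ℝ) (x : α) : 0 < tiltQ P ρ x :=
  div_pos (Real.rpow_pos_of_pos (hpos x) _) (tiltZ_pos hpos ρ)

lemma tiltQ_pmf (hpos : ∀ x, 0 < P x) (ρ : ℝ) : IsPMF (tiltQ P ρ) := by
  refine ⟨fun x => (tiltQ_pos hpos ρ x).le, ?_⟩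
  unfold tiltQ
  rw [← Finset.sum_div]
  exact div_self (tiltZ_pos hpos ρ).ne'

lemma log_tiltQ (hpos : ∀ x, 0 < P x) (ρ : ℝ) (x : α) :
    Real.log (tiltQ P ρ x) = (1/ρ) * Real.log (P x) - Real.log (tiltZ P ρ) := by
  unfold tiltQ
  rw [Real.log_div (Real.rpow_pos_of_pos (hpos x) _).ne' (tiltZ_pos hpos ρ).ne',
    Real.log_rpow (hpos x)]

lemma relEnt_eq_sub (hpos : ∀ x, 0 < P x) {Q : α → ℝ} (hQ : ∀ x, 0 ≤ Q x) :
    relEnt Q P = (∑ x, Q x * Real.log (Q x)) - ∑ x, Q x * Real.log (P x) := by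
  unfold relEnt
  rw [← Finset.sum_sub_distrib]
  refine Finset.sum_congr rfl fun x _ => ?_
  rcases eq_or_lt_of_le (hQ x) with h | h
  · simp [← h]
  · rw [Real.log_div (ne_of_gt h) (hpos x).ne']; ring

lemma tilt_identity (hpos : ∀ x, 0 < P x) {ρ : ℝ} (hρ : ρ ≠ 0) :
    relEnt (tiltQ P ρ) P + (1 - ρ) * shannonEnt (tiltQ P ρ)
      = -ρ * Real.log (tiltZ P ρ) := by
  have hpmf := tiltQ_pmf hpos ρ
  have hS1 : ∑ x, tiltQ P ρ x * Real.log (tiltQ P ρ x)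
      = (1/ρ) * (∑ x, tiltQ P ρ x * Real.log (P x)) - Real.log (tiltZ P ρ) := by
    rw [Finset.mul_sum]
    have : ∀ x ∈ Finset.univ, tiltQ P ρ x * Real.log (tiltQ P ρ x)
        = (1/ρ) * (tiltQ P ρ x * Real.log (P x))
          - tiltQ P ρ x * Real.log (tiltZ P ρ) := by
      intro x _
      rw [log_tiltQ hpos]; ring
    rw [Finset.sum_congr rfl this, Finset.sum_sub_distrib, ← Finset.sum_mul, hpmf.2, one_mul]
  rw [relEnt_eq_sub hpos hpmf.1]
  unfold shannonEnt
  rw [hS1]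
  field_simp
  ring

lemma E_le_relEnt_add (hpos : ∀ x, 0 < P x) {Q : α → ℝ} (hQ : IsPMF Q)
    {ρ : ℝ} (hρ : 0 < ρ) :
    -ρ * Real.log (tiltZ P ρ) ≤ relEnt Q P + (1 - ρ) * shannonEnt Q := by
  have h0 := gibbs_sum hQ (tiltQ_pos hpos ρ) (tiltQ_pmf hpos ρ).2.le
  have hterm : ∀ x ∈ Finset.univ, ρ * (Q x * Real.log (Q x / tiltQ P ρ x))
      = ρ * (Q x * Real.log (Q x)) - Q x * Real.log (P x)
        + ρ * (Q x * Real.log (tiltZ P ρ)) := by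
    intro x _
    rcases eq_or_lt_of_le (hQ.1 x) with h | h
    · simp [← h]
    · rw [Real.log_div (ne_of_gt h) (tiltQ_pos hpos ρ x).ne', log_tiltQ hpos]
      field_simp
      ring
  have h1 : ρ * ∑ x, Q x * Real.log (Q x / tiltQ P ρ x)
      = ρ * (∑ x, Q x * Real.log (Q x)) - (∑ x, Q x * Real.log (P x))
        + ρ * Real.log (tiltZ P ρ) := by
    rw [Finset.mul_sum, Finset.sum_congr rfl hterm, Finset.sum_add_distrib,
      Finset.sum_sub_distrib, ← Finset.mul_sum, ← Finset.mul_sum, ← Finset.sum_mul, hQ.2, one_mul]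
  have h2 : 0 ≤ ρ * ∑ x, Q x * Real.log (Q x / tiltQ P ρ x) := by positivity
  rw [relEnt_eq_sub hpos hQ.1]
  unfold shannonEnt
  nlinarith [h2, h1]

lemma tiltQ_one (hP : IsPMF P) : tiltQ P 1 = P := by
  funext x
  unfold tiltQ tiltZ
  simp only [one_div, inv_one, Real.rpow_one]
  rw [hP.2, div_one]

lemma cont_rpow_inv (hpos : ∀ x, 0 < P x) (x : α) :
    ContinuousOn (fun ρ : ℝ => P x ^ (1/ρ)) {ρ : ℝ | ρ ≠ 0} := by
  have : (fun ρ : ℝ => P x ^ (1/ρ)) = fun ρ => Real.exp (Real.log (P x) * (1/ρ)) := by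
    funext ρ
    rw [Real.rpow_def_of_pos (hpos x)]
  rw [this]
  apply Real.continuous_exp.comp_continuousOn
  simp only [one_div]
  exact continuousOn_const.mul continuousOn_inv₀

lemma cont_tiltZ (hpos : ∀ x, 0 < P x) :
    ContinuousOn (fun ρ : ℝ => tiltZ P ρ) {ρ : ℝ | ρ ≠ 0} := by
  unfold tiltZ
  exact continuousOn_finset_sum _ fun x _ => cont_rpow_inv hpos x

lemma cont_tiltQ (hpos : ∀ x, 0 < P x) (x : α) :
    ContinuousOn (fun ρ : ℝ => tiltQ P ρ x) {ρ : ℝ | ρ ≠ 0} := by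
  unfold tiltQ
  exact (cont_rpow_inv hpos x).div (cont_tiltZ hpos)
    fun ρ _ => (tiltZ_pos hpos ρ).ne'

lemma cont_ent (hpos : ∀ x, 0 < P x) :
    ContinuousOn (fun ρ : ℝ => shannonEnt (tiltQ P ρ)) {ρ : ℝ | ρ ≠ 0} := by
  unfold shannonEnt
  apply ContinuousOn.neg
  apply continuousOn_finset_sum
  intro x _
  exact (cont_tiltQ hpos x).mul
    ((cont_tiltQ hpos x).log fun ρ _ => (tiltQ_pos hpos ρ x).ne')

lemma relEnt_self (hpos : ∀ x, 0 < P x) : relEnt P P = 0 := by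
  unfold relEnt
  apply Finset.sum_eq_zero
  intro x _
  rw [div_self (hpos x).ne', Real.log_one, mul_zero]

theorem false_accept_exponent_gallager_form'
    (hP : IsPMF P) (hpos : ∀ x, 0 < P x)
    (Rs Rw : ℝ) (hRs : 0 ≤ Rs) (hRw : 0 ≤ Rw) :
    sInf {v : ℝ | ∃ Q : α → ℝ, IsPMF Q ∧
        v = relEnt Q P + min Rs (max (shannonEnt Q - Rw) 0)} =
      sInf ((fun s => sSup ((fun ρ =>
          -ρ * Real.log (∑ x, P x ^ (1 / ρ)) + s * Rs - (1 - ρ) * Rw) '' Set.Icc s 1)) ''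
        Set.Icc (0 : ℝ) 1) := by
  classical
  set SL : Set ℝ := {v : ℝ | ∃ Q : α → ℝ, IsPMF Q ∧
      v = relEnt Q P + min Rs (max (shannonEnt Q - Rw) 0)} with hSL
  set f : ℝ → ℝ → ℝ := fun s ρ =>
      -ρ * Real.log (∑ x, P x ^ (1 / ρ)) + s * Rs - (1 - ρ) * Rw with hfdef
  have hfZ : ∀ s ρ, f s ρ = -ρ * Real.log (tiltZ P ρ) + s * Rs - (1 - ρ) * Rw := by
    intro s ρ; rfl
  -- nonnegativity of elements of SL
  have hSLnonneg : ∀ v ∈ SL, (0:ℝ) ≤ v := by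
    rintro v ⟨Q, hQ, rfl⟩
    have h1 := relEnt_nonneg hQ hP hpos
    have h2 : (0:ℝ) ≤ min Rs (max (shannonEnt Q - Rw) 0) :=
      le_min hRs (le_max_right _ _)
    linarith
  have hbddL : BddBelow SL := ⟨0, fun v hv => hSLnonneg v hv⟩
  have hLne : SL.Nonempty := ⟨_, P, hP, rfl⟩
  -- value at ρ = 1
  have hZ1 : Real.log (∑ x, P x ^ ((1:ℝ) / 1)) = 0 := by
    have h : ∑ x, P x ^ ((1:ℝ)/1) = 1 := by
      rw [show ((1:ℝ)/1) = 1 by norm_num]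
      simp only [Real.rpow_one]
      exact hP.2
    rw [h, Real.log_one]
  have hf1 : ∀ s, f s 1 = s * Rs := by
    intro s
    simp only [hfdef]
    rw [hZ1]; ring
  -- upper bound on f
  obtain ⟨x₀⟩ := ‹Nonempty α›
  set C : ℝ := |Real.log (P x₀)| + Rs with hCdef
  have hfub : ∀ s ∈ Set.Icc (0:ℝ) 1, ∀ ρ ∈ Set.Icc s 1, f s ρ ≤ C := by
    rintro s ⟨hs0, hs1⟩ ρ ⟨hρs, hρ1⟩
    have habs : (0:ℝ) ≤ |Real.log (P x₀)| := abs_nonneg _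
    have hsRs : s * Rs ≤ Rs := by nlinarith
    rcases eq_or_lt_of_le (hs0.trans hρs) with h0 | h0
    · rw [hfZ, ← h0]
      have : (1:ℝ) - 0 ≥ 0 := by norm_num
      simp only [neg_zero, zero_mul, sub_zero, zero_add]
      nlinarith
    · have hZge : P x₀ ^ (1/ρ) ≤ tiltZ P ρ := by
        apply Finset.single_le_sum (f := fun x => P x ^ (1/ρ))
          (fun x _ => (Real.rpow_pos_of_pos (hpos x) _).le) (Finset.mem_univ x₀)
      have hlog : (1/ρ) * Real.log (P x₀) ≤ Real.log (tiltZ P ρ) := by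
        rw [← Real.log_rpow (hpos x₀)]
        exact Real.log_le_log (Real.rpow_pos_of_pos (hpos x₀) _) hZge
      have h3 : -ρ * Real.log (tiltZ P ρ) ≤ -Real.log (P x₀) := by
        have := mul_le_mul_of_nonneg_left hlog h0.le
        have hinv : ρ * ((1/ρ) * Real.log (P x₀)) = Real.log (P x₀) := by
          field_simp
        nlinarith
      rw [hfZ]
      nlinarith [neg_abs_le (Real.log (P x₀)), le_abs_self (Real.log (P x₀)), abs_nonneg (Real.log (P x₀))]
  have hbddA : ∀ s ∈ Set.Icc (0:ℝ) 1, BddAbove (f s '' Set.Icc s 1) := by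
    intro s hs
    exact ⟨C, by rintro y ⟨ρ, hρ, rfl⟩; exact hfub s hs ρ hρ⟩
  have h1mem : ∀ s ∈ Set.Icc (0:ℝ) 1, (1:ℝ) ∈ Set.Icc s 1 := by
    rintro s ⟨hs0, hs1⟩; exact ⟨hs1, le_refl 1⟩
  have hsup_ge : ∀ s ∈ Set.Icc (0:ℝ) 1, s * Rs ≤ sSup (f s '' Set.Icc s 1) := by
    intro s hs
    rw [← hf1 s]
    exact le_csSup (hbddA s hs) ⟨1, h1mem s hs, rfl⟩
  have hbddR : BddBelow ((fun s => sSup (f s '' Set.Icc s 1)) '' Set.Icc (0:ℝ) 1) := by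
    refine ⟨0, ?_⟩
    rintro y ⟨s, hs, rfl⟩
    have := hsup_ge s hs
    nlinarith [hs.1]
  -- the entropy along the tilted family
  set h : ℝ → ℝ := fun ρ => shannonEnt (tiltQ P ρ) with hhdef
  have hident : ∀ ρ : ℝ, ρ ≠ 0 → ∀ s,
      f s ρ = relEnt (tiltQ P ρ) P + (1 - ρ) * h ρ + s * Rs - (1 - ρ) * Rw := by
    intro ρ hρ s
    rw [hfZ, ← tilt_identity hpos hρ]
  have hRne : ((fun s => sSup (f s '' Set.Icc s 1)) '' Set.Icc (0:ℝ) 1).Nonempty :=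
    ⟨_, ⟨0, ⟨le_refl 0, zero_le_one⟩, rfl⟩⟩
  have hh1 : h 1 = shannonEnt P := by
    simp only [hhdef]
    rw [tiltQ_one hP]
  have dir1 : sInf SL ≤ sInf ((fun s => sSup (f s '' Set.Icc s 1)) '' Set.Icc (0:ℝ) 1) := by
    apply le_csInf hRne
    rintro b ⟨s, ⟨hs0, hs1⟩, rfl⟩
    show sInf SL ≤ sSup (f s '' Set.Icc s 1)
    by_cases hc1 : shannonEnt P ≤ Rw
    · have hu : relEnt P P + min Rs (max (shannonEnt P - Rw) 0) ∈ SL := ⟨P, hP, rfl⟩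
      have huval : relEnt P P + min Rs (max (shannonEnt P - Rw) 0) = 0 := by
        rw [relEnt_self hpos, max_eq_right (by linarith), min_eq_right hRs]
        ring
      calc sInf SL ≤ _ := csInf_le hbddL hu
        _ = 0 := huval
        _ ≤ s * Rs := by nlinarith
        _ ≤ _ := hsup_ge s ⟨hs0, hs1⟩
    · push_neg at hc1
      have key : ∀ ρ' : ℝ, 0 < ρ' → ρ' ≤ 1 → s ≤ ρ' → h ρ' = Rw →
          sInf SL ≤ sSup (f s '' Set.Icc s 1) := by
        intro ρ' h0 h1' hsρ hhρ
        have hu : relEnt (tiltQ P ρ') P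
            + min Rs (max (shannonEnt (tiltQ P ρ') - Rw) 0) ∈ SL :=
          ⟨_, tiltQ_pmf hpos ρ', rfl⟩
        have hle : relEnt (tiltQ P ρ') P
            + min Rs (max (shannonEnt (tiltQ P ρ') - Rw) 0) ≤ f s ρ' := by
          rw [hident ρ' (ne_of_gt h0) s]
          have hse : shannonEnt (tiltQ P ρ') = h ρ' := rfl
          rw [hse, hhρ, sub_self, max_self, min_eq_right hRs]
          nlinarith
        exact (csInf_le hbddL hu).trans
          (hle.trans (le_csSup (hbddA s ⟨hs0, hs1⟩) ⟨ρ', ⟨hsρ, h1'⟩, rfl⟩))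
      by_cases hs' : 0 < s
      · by_cases hhs : Rw ≤ h s
        · have hu : relEnt (tiltQ P s) P
              + min Rs (max (shannonEnt (tiltQ P s) - Rw) 0) ∈ SL :=
            ⟨_, tiltQ_pmf hpos s, rfl⟩
          have hle : relEnt (tiltQ P s) P
              + min Rs (max (shannonEnt (tiltQ P s) - Rw) 0) ≤ f s s := by
            rw [hident s (ne_of_gt hs') s]
            have hse : shannonEnt (tiltQ P s) = h s := rfl
            rw [hse, max_eq_left (by linarith)]
            have hmin1 : min Rs (h s - Rw) ≤ Rs := min_le_left _ _
            have hmin2 : min Rs (h s - Rw) ≤ h s - Rw := min_le_right _ _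
            nlinarith
          exact (csInf_le hbddL hu).trans
            (hle.trans (le_csSup (hbddA s ⟨hs0, hs1⟩) ⟨s, ⟨le_refl s, hs1⟩, rfl⟩))
        · push_neg at hhs
          have hcont : ContinuousOn h (Set.Icc s 1) :=
            (cont_ent hpos).mono (fun ρ hρ => ne_of_gt (lt_of_lt_of_le hs' hρ.1))
          have hmem : Rw ∈ Set.Icc (h s) (h 1) := ⟨hhs.le, by rw [hh1]; exact hc1.le⟩
          obtain ⟨ρ', hρ'mem, hρ'eq⟩ := intermediate_value_Icc hs1 hcont hmem
          exact key ρ' (lt_of_lt_of_le hs' hρ'mem.1) hρ'mem.2 hρ'mem.1 hρ'eq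
      · have hs00 : s = 0 := le_antisymm (not_lt.mp hs') hs0
        subst hs00
        by_cases hex : ∃ ρ₀ : ℝ, 0 < ρ₀ ∧ ρ₀ ≤ 1 ∧ h ρ₀ ≤ Rw
        · obtain ⟨ρ₀, hρ₀0, hρ₀1, hρ₀⟩ := hex
          have hcont : ContinuousOn h (Set.Icc ρ₀ 1) :=
            (cont_ent hpos).mono (fun ρ hρ => ne_of_gt (lt_of_lt_of_le hρ₀0 hρ.1))
          have hmem : Rw ∈ Set.Icc (h ρ₀) (h 1) := ⟨hρ₀, by rw [hh1]; exact hc1.le⟩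
          obtain ⟨ρ', hρ'mem, hρ'eq⟩ := intermediate_value_Icc hρ₀1 hcont hmem
          exact key ρ' (lt_of_lt_of_le hρ₀0 hρ'mem.1) hρ'mem.2
            ((lt_of_lt_of_le hρ₀0 hρ'mem.1).le) hρ'eq
        · push_neg at hex
          apply le_of_forall_pos_le_add
          intro ε hε
          set L : ℝ := Real.log (Fintype.card α) with hLdef
          have hL : 0 ≤ L := Real.log_nonneg (by exact_mod_cast Fintype.card_pos)
          set ρ : ℝ := min 1 (ε / (L + 1)) with hρdef
          have hρ0 : 0 < ρ := lt_min one_pos (by positivity)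
          have hρ1 : ρ ≤ 1 := min_le_left _ _
          have hρε : ρ ≤ ε / (L + 1) := min_le_right _ _
          have hhρ : Rw < h ρ := hex ρ hρ0 hρ1
          have hhL : h ρ ≤ L := shannonEnt_le_log_card (tiltQ_pmf hpos ρ)
          have hu : relEnt (tiltQ P ρ) P
              + min Rs (max (shannonEnt (tiltQ P ρ) - Rw) 0) ∈ SL :=
            ⟨_, tiltQ_pmf hpos ρ, rfl⟩
          have hdiv : (ε / (L + 1)) * (L + 1) = ε := by field_simp
          have hle : relEnt (tiltQ P ρ) P
              + min Rs (max (shannonEnt (tiltQ P ρ) - Rw) 0) ≤ f 0 ρ + ε := by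
            rw [hident ρ (ne_of_gt hρ0) 0]
            have hse : shannonEnt (tiltQ P ρ) = h ρ := rfl
            rw [hse, max_eq_left (by linarith)]
            have hmin2 : min Rs (h ρ - Rw) ≤ h ρ - Rw := min_le_right _ _
            have hmul : ρ * (h ρ - Rw) ≤ ε := by
              have h1 : ρ * (h ρ - Rw) ≤ ρ * L := by nlinarith
              have h2 : ρ * L ≤ (ε / (L + 1)) * L := mul_le_mul_of_nonneg_right hρε hL
              nlinarith
            nlinarith
          calc sInf SL ≤ _ := csInf_le hbddL hu
            _ ≤ f 0 ρ + ε := hle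
            _ ≤ sSup (f 0 '' Set.Icc 0 1) + ε := by
                have := le_csSup (hbddA 0 ⟨le_refl 0, zero_le_one⟩)
                  (Set.mem_image_of_mem (f 0) (⟨hρ0.le, hρ1⟩ : ρ ∈ Set.Icc (0:ℝ) 1))
                linarith
  have dir2 : sInf ((fun s => sSup (f s '' Set.Icc s 1)) '' Set.Icc (0:ℝ) 1) ≤ sInf SL := by
    apply le_csInf hLne
    rintro v ⟨Q, hQ, rfl⟩
    have hD : 0 ≤ relEnt Q P := relEnt_nonneg hQ hP hpos
    by_cases hq : Rs ≤ max (shannonEnt Q - Rw) 0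
    · have hmem : sSup (f 1 '' Set.Icc (1:ℝ) 1)
          ∈ (fun s => sSup (f s '' Set.Icc s 1)) '' Set.Icc (0:ℝ) 1 :=
        ⟨1, ⟨zero_le_one, le_refl 1⟩, rfl⟩
      have hval : sSup (f 1 '' Set.Icc (1:ℝ) 1) = Rs := by
        rw [Set.Icc_self, Set.image_singleton, csSup_singleton, hf1, one_mul]
      calc sInf ((fun s => sSup (f s '' Set.Icc s 1)) '' Set.Icc (0:ℝ) 1)
          ≤ sSup (f 1 '' Set.Icc (1:ℝ) 1) := csInf_le hbddR hmem
        _ = Rs := hval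
        _ ≤ relEnt Q P + min Rs (max (shannonEnt Q - Rw) 0) := by
            rw [min_eq_left hq]; linarith
    · push_neg at hq
      have hmem : sSup (f 0 '' Set.Icc (0:ℝ) 1)
          ∈ (fun s => sSup (f s '' Set.Icc s 1)) '' Set.Icc (0:ℝ) 1 :=
        ⟨0, ⟨le_refl 0, zero_le_one⟩, rfl⟩
      have hsup : sSup (f 0 '' Set.Icc (0:ℝ) 1)
          ≤ relEnt Q P + max (shannonEnt Q - Rw) 0 := by
        apply Real.sSup_le
        · rintro y ⟨ρ, ⟨hρ0, hρ1⟩, rfl⟩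
          rcases eq_or_lt_of_le hρ0 with h0 | h0
          · have hval0 : f 0 0 = -Rw := by
              simp only [hfdef]
              norm_num
            rw [← h0, hval0]
            have := le_max_right (shannonEnt Q - Rw) (0:ℝ)
            linarith
          · have hE := E_le_relEnt_add hpos hQ h0
            rw [hfZ]
            have hmax1 := le_max_left (shannonEnt Q - Rw) (0:ℝ)
            have hmax2 := le_max_right (shannonEnt Q - Rw) (0:ℝ)
            nlinarith [hE]
        · have := le_max_right (shannonEnt Q - Rw) (0:ℝ)
          linarith
      calc sInf ((fun s => sSup (f s '' Set.Icc s 1)) '' Set.Icc (0:ℝ) 1)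
          ≤ sSup (f 0 '' Set.Icc (0:ℝ) 1) := csInf_le hbddR hmem
        _ ≤ relEnt Q P + max (shannonEnt Q - Rw) 0 := hsup
        _ = relEnt Q P + min Rs (max (shannonEnt Q - Rw) 0) := by
            rw [min_eq_right hq.le]
  exact le_antisymm dir1 dir2

end Aux

/-- Gallager-style form of the false-accept exponent: for a strictly positive pmf `P` and
`R_s, R_w ≥ 0`,
`min_Q [ D(Q‖P) + min{R_s, [H(Q) − R_w]₊} ]
  = min_{0≤s≤1} max_{s≤ρ≤1} { −ρ ln(∑ₓ P x^{1/ρ}) + s·R_s − (1−ρ)·R_w }`. -/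
theorem false_accept_exponent_gallager_form {α : Type*} [Fintype α] [Nonempty α]
    (P : α → ℝ) (hP : IsPMF P) (hpos : ∀ x, 0 < P x)
    (Rs Rw : ℝ) (hRs : 0 ≤ Rs) (hRw : 0 ≤ Rw) :
    sInf {v : ℝ | ∃ Q : α → ℝ, IsPMF Q ∧
        v = relEnt Q P + min Rs (max (shannonEnt Q - Rw) 0)} =
      sInf ((fun s => sSup ((fun ρ =>
          -ρ * Real.log (∑ x, P x ^ (1 / ρ)) + s * Rs - (1 - ρ) * Rw) '' Set.Icc s 1)) ''
        Set.Icc (0 : ℝ) 1) := by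
  exact false_accept_exponent_gallager_form' hP hpos Rs Rw hRs hRw
end

section
/- Let 𝒳 be a finite nonempty set, let P be a pmf on 𝒳 with P(x) > 0 for all x, and let 0 ≤ R < H(P). Then E_sec(R) := inf{ D(Q‖P) : Q a pmf on 𝒳 with H(Q) ≤ R } > 0 (with inf ∅ := +∞). -/
/-!
The constraint set `{Q | IsPMF Q ∧ H(Q) ≤ R}` is a closed subset of the standard simplex, hence
compact, and `Q ↦ D(Q‖P)` is continuous, so the infimum is attained when the set is nonempty.
The set does not contain `P` because `R < H(P)`, and `D(Q‖P) > 0` for every pmf `Q ≠ P`: for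
pmfs, `D(Q‖P) = ∑ P a · φ(Q a / P a)` with `φ x = x log x + 1 - x`, which is nonnegative on
`[0, ∞)` and vanishes only at `1`.
-/

open scoped ENNReal

open InformationTheory

lemma IsCompact.ofReal_iInf_pos {X : Type*} [TopologicalSpace X] {K : Set X} (hK : IsCompact K)
    {f : X → ℝ} (hf : ContinuousOn f K) (hpos : ∀ x ∈ K, 0 < f x) :
    0 < ⨅ x : K, ENNReal.ofReal (f x) := by
  rcases K.eq_empty_or_nonempty with rfl | hne
  · simp [iInf_of_empty]
  obtain ⟨x₀, hx₀, hmin⟩ := hK.exists_isMinOn hne hf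
  exact (ENNReal.ofReal_pos.mpr (hpos x₀ hx₀)).trans_le
    (le_iInf fun x => ENNReal.ofReal_le_ofReal (hmin x.2))

section Entropy

variable {α : Type*} [Fintype α]

lemma continuous_shannonEnt : Continuous (shannonEnt : (α → ℝ) → ℝ) := by
  unfold shannonEnt
  fun_prop

lemma isCompact_setOf_isPMF_shannonEnt_le (R : ℝ) :
    IsCompact {Q : α → ℝ | IsPMF Q ∧ shannonEnt Q ≤ R} :=
  (isCompact_stdSimplex ℝ α).inter_right (isClosed_le continuous_shannonEnt continuous_const)

lemma continuous_relEnt_left {P : α → ℝ} (hP : ∀ a, P a ≠ 0) :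
    Continuous fun Q : α → ℝ => relEnt Q P := by
  have hsummand (Q : α → ℝ) (a : α) :
      Q a * Real.log (Q a / P a) = P a * (Q a / P a * Real.log (Q a / P a)) := by
    field_simp [hP a]
  simp only [relEnt, hsummand]
  fun_prop

lemma relEnt_eq_sum_mul_klFun {Q P : α → ℝ} (hsum : ∑ a, Q a = ∑ a, P a) (hP : ∀ a, P a ≠ 0) :
    relEnt Q P = ∑ a, P a * klFun (Q a / P a) := by
  have hsummand (a : α) :
      P a * klFun (Q a / P a) = Q a * Real.log (Q a / P a) + (P a - Q a) := by
    rw [klFun_apply]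
    field_simp [hP a]
    ring
  rw [Finset.sum_congr rfl fun a _ => hsummand a, Finset.sum_add_distrib, Finset.sum_sub_distrib,
    hsum, sub_self, add_zero, relEnt]

lemma relEnt_pos_of_ne {Q P : α → ℝ} (hQ : IsPMF Q) (hP : IsPMF P) (hpos : ∀ a, 0 < P a)
    (hne : Q ≠ P) : 0 < relEnt Q P := by
  have hratio (a : α) : 0 ≤ Q a / P a := div_nonneg (hQ.1 a) (hpos a).le
  obtain ⟨a, ha⟩ := Function.ne_iff.mp hne
  rw [relEnt_eq_sum_mul_klFun (hQ.2.trans hP.2.symm) fun a => (hpos a).ne']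
  refine Finset.sum_pos' (fun b _ => mul_nonneg (hpos b).le (klFun_nonneg (hratio b)))
    ⟨a, Finset.mem_univ a, mul_pos (hpos a) ((klFun_nonneg (hratio a)).lt_of_ne' ?_)⟩
  rwa [ne_eq, klFun_eq_zero_iff (hratio a), div_eq_one_iff_eq (hpos a).ne']

end Entropy

theorem secrecy_exponent_positive_general {α : Type*} [Fintype α]
    (P : α → ℝ) (hP : IsPMF P) (hpos : ∀ x, 0 < P x)
    (R : ℝ) (hR : R < shannonEnt P) :
    0 < ⨅ Q : {Q : α → ℝ // IsPMF Q ∧ shannonEnt Q ≤ R},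
        ENNReal.ofReal (relEnt Q.1 P) :=
  (isCompact_setOf_isPMF_shannonEnt_le R).ofReal_iInf_pos
    (continuous_relEnt_left fun a => (hpos a).ne').continuousOn
    fun _ hQ => relEnt_pos_of_ne hQ.1 hP hpos fun hQP => (hQP ▸ hR).not_ge hQ.2

/-- The secrecy exponent `E_sec(R) = inf{D(Q‖P) : H(Q) ≤ R}` (with `inf ∅ = +∞`,
realized by the infimum in `[0,∞]` over the possibly empty subtype) is strictly
positive whenever `0 ≤ R < H(P)`. -/
theorem secrecy_exponent_positive {α : Type*} [Fintype α] [Nonempty α]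
    (P : α → ℝ) (hP : IsPMF P) (hpos : ∀ x, 0 < P x)
    (R : ℝ) (hR0 : 0 ≤ R) (hR : R < shannonEnt P) :
    0 < ⨅ Q : {Q : α → ℝ // IsPMF Q ∧ shannonEnt Q ≤ R},
        ENNReal.ofReal (relEnt Q.1 P) :=
  secrecy_exponent_positive_general P hP hpos R hR
end

section
/- Let K be a nonempty compact topological space, let Λ, H : K → ℝ be continuous, let R ∈ ℝ, and suppose the set {x ∈ K : H(x) ≥ R} is nonempty. Then sup_{ρ ≥ 0} min_{x∈K} { Λ(x) − [H(x) − R]₊ + ρ·[R − H(x)]₊ } = min_{x∈K : H(x) ≥ R} { Λ(x) − H(x) + R }. -/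
/-- Let `K` be a nonempty compact space, `Λ H : K → ℝ` continuous, `R : ℝ`, with
`{x | H x ≥ R}` nonempty.  Then
`sup_{ρ ≥ 0} min_{x∈K} { Λ x − [H x − R]₊ + ρ·[R − H x]₊ } = min_{x : H x ≥ R} { Λ x − H x + R }`,
where `[t]₊ = max t 0`. -/
theorem sup_rho_min_eq_constrained_min
    {K : Type*} [TopologicalSpace K] [CompactSpace K] [Nonempty K]
    (Λ H : K → ℝ) (hΛ : Continuous Λ) (hH : Continuous H) (R : ℝ)
    (hne : ∃ x, R ≤ H x) :
    sSup ((fun ρ => sInf (Set.range fun x =>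
        Λ x - max (H x - R) 0 + ρ * max (R - H x) 0)) '' Set.Ici (0 : ℝ)) =
      sInf ((fun x => Λ x - H x + R) '' {x | R ≤ H x}) := by
  set f : ℝ → ℝ := fun ρ => sInf (Set.range fun x =>
      Λ x - max (H x - R) 0 + ρ * max (R - H x) 0) with hf
  set M : ℝ := sInf ((fun x => Λ x - H x + R) '' {x | R ≤ H x}) with hM
  have hgcont : ∀ ρ : ℝ, Continuous (fun x : K =>
      Λ x - max (H x - R) 0 + ρ * max (R - H x) 0) := by
    intro ρ; fun_prop
  have hbddg : ∀ ρ : ℝ, BddBelow (Set.range fun x : K =>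
      Λ x - max (H x - R) 0 + ρ * max (R - H x) 0) := fun ρ =>
    (isCompact_range (hgcont ρ)).bddBelow
  have hSclosed : IsClosed {x : K | R ≤ H x} := isClosed_le continuous_const hH
  have hScomp : IsCompact {x : K | R ≤ H x} := hSclosed.isCompact
  have hSne : ({x : K | R ≤ H x}).Nonempty := hne
  have hbddM : BddBelow ((fun x => Λ x - H x + R) '' {x | R ≤ H x}) :=
    (hScomp.image (by fun_prop)).bddBelow
  have hMle : ∀ x, R ≤ H x → M ≤ Λ x - H x + R := fun x hx =>
    csInf_le hbddM ⟨x, hx, rfl⟩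
  -- Step 1 : f ρ ≤ M for every ρ ≥ 0
  have step1 : ∀ ρ : ℝ, 0 ≤ ρ → f ρ ≤ M := by
    intro ρ hρ
    obtain ⟨x₀, hx₀S, hx₀min⟩ := hScomp.exists_isMinOn hSne
      ((by fun_prop : Continuous fun x => Λ x - H x + R).continuousOn)
    have hx₀R : R ≤ H x₀ := hx₀S
    have h1 : max (H x₀ - R) 0 = H x₀ - R := max_eq_left (by linarith)
    have h2 : max (R - H x₀) 0 = 0 := max_eq_right (by linarith)
    have hMeq : M = Λ x₀ - H x₀ + R :=
      le_antisymm (hMle x₀ hx₀R)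
        (le_csInf (hSne.image _) (by rintro y ⟨x, hx, rfl⟩; exact hx₀min hx))
    have : f ρ ≤ Λ x₀ - max (H x₀ - R) 0 + ρ * max (R - H x₀) 0 :=
      csInf_le (hbddg ρ) ⟨x₀, rfl⟩
    simp only [h1, h2] at this
    rw [hMeq]; linarith
  have hbddAbove : BddAbove (f '' Set.Ici (0 : ℝ)) :=
    ⟨M, by rintro y ⟨ρ, hρ, rfl⟩; exact step1 ρ hρ⟩
  have hSetne : (f '' Set.Ici (0 : ℝ)).Nonempty := ⟨f 0, 0, Set.self_mem_Ici, rfl⟩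
  apply le_antisymm
  · exact csSup_le hSetne (by rintro y ⟨ρ, hρ, rfl⟩; exact step1 ρ hρ)
  · apply le_of_forall_pos_le_add
    intro ε hε
    obtain ⟨ρ, hρ0, hfρ⟩ : ∃ ρ, 0 ≤ ρ ∧ M - ε ≤ f ρ := by
      obtain ⟨xc, -, hxc⟩ := isCompact_univ.exists_isMinOn Set.univ_nonempty
        hΛ.continuousOn
      have hcle : ∀ x, Λ xc ≤ Λ x := fun x => hxc (Set.mem_univ x)
      by_cases hT : ({x : K | Λ x ≤ M - ε}).Nonempty
      · obtain ⟨xt, hxtT, hxtmax⟩ :=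
          ((isClosed_le hΛ continuous_const).isCompact).exists_isMaxOn hT
            hH.continuousOn
        have hxtT' : Λ xt ≤ M - ε := hxtT
        have hxtR : H xt < R := by
          by_contra h
          push_neg at h
          have := hMle xt h
          linarith
        set δ : ℝ := R - H xt with hδ
        have hδpos : 0 < δ := by simp only [hδ]; linarith
        set ρ : ℝ := max 0 ((M - ε - Λ xc) / δ) with hρdef
        have hρ0 : 0 ≤ ρ := le_max_left _ _
        refine ⟨ρ, hρ0, le_csInf (Set.range_nonempty _) ?_⟩
        rintro y ⟨x, rfl⟩
        simp only []
        rcases le_or_gt R (H x) with hx | hx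
        · have h1 : max (H x - R) 0 = H x - R := max_eq_left (by linarith)
          have h2 : max (R - H x) 0 = 0 := max_eq_right (by linarith)
          have := hMle x hx
          simp only [h1, h2]; linarith
        · have h1 : max (H x - R) 0 = 0 := max_eq_right (by linarith)
          have h2 : max (R - H x) 0 = R - H x := max_eq_left (by linarith)
          simp only [h1, h2]
          rcases le_or_gt (Λ x) (M - ε) with hxT | hxT
          · have hHx : H x ≤ H xt := hxtmax hxT
            have h3 : δ ≤ R - H x := by simp only [hδ]; linarith
            have h4 : (M - ε - Λ xc) / δ ≤ ρ := le_max_right _ _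
            have h5 : M - ε - Λ xc ≤ ρ * δ := by
              rw [div_le_iff₀ hδpos] at h4; linarith
            have h6 : ρ * δ ≤ ρ * (R - H x) := mul_le_mul_of_nonneg_left h3 hρ0
            have := hcle x
            linarith
          · have : 0 ≤ ρ * (R - H x) := mul_nonneg hρ0 (by linarith)
            linarith
      · simp only [Set.nonempty_def, not_exists, Set.mem_setOf_eq, not_le] at hT
        refine ⟨0, le_refl 0, le_csInf (Set.range_nonempty _) ?_⟩
        rintro y ⟨x, rfl⟩
        simp only []
        rcases le_or_gt R (H x) with hx | hx
        · have h1 : max (H x - R) 0 = H x - R := max_eq_left (by linarith)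
          have := hMle x hx
          simp only [h1]; linarith
        · have h1 : max (H x - R) 0 = 0 := max_eq_right (by linarith)
          have := hT x
          simp only [h1]; linarith
    have hle : f ρ ≤ sSup (f '' Set.Ici (0 : ℝ)) := le_csSup hbddAbove ⟨ρ, hρ0, rfl⟩
    linarith
end
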